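/- Let H = diag(H₁, …, H_L) be block-diagonal with each H_l ∈ R^{m_l×m_l} symmetric positive definite, let W have blocks W_l with each H_l W_l of full row rank, and fix an initialization W⁰ with every entry of H_l W_l⁰ nonzero. For each l let λ_{l,1}(W⁰) ≥ λ_{l,m_l}(W⁰) > 0 be the largest and smallest eigenvalues of the preconditioned block diag(|H_l W_l⁰|)⁻¹ H_l, and let κ'_l(W⁰) = λ_{l,1}(W⁰)/λ_{l,m_l}(W⁰). Assume (i) for every l: ‖H_l W_l‖₁² − Tr(H_l)·Tr(W_lᵀ H_l W_l)·(2 λ_{l,m_l}(W⁰)/(λ_{l,1}(W⁰)+λ_{l,m_l}(W⁰))) > 0, and (ii) the overlap condition min_l ( ‖H_l W_l‖₁ + √(‖H_l W_l‖₁² − Tr(H_l)·Tr(W_lᵀ H_l W_l)·(2 λ_{l,m_l}(W⁰)/(λ_{l,1}(W⁰)+λ_{l,m_l}(W⁰)))) ) / Tr(H_l) > max_l ( ‖H_l W_l‖₁ − √(‖H_l W_l‖₁² − Tr(H_l)·Tr(W_lᵀ H_l W_l)·(2 λ_{l,m_l}(W⁰)/(λ_{l,1}(W⁰)+λ_{l,m_l}(W⁰))))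 ) / Tr(H_l). Then there exists a single global step size η > 0 such that for every block l the whitened update W_l' = W_l − η (H_l W_l (H_l W_l)ᵀ)^{-1/2}(H_l W_l) satisfies (L_l(W_l') − L_l*)/(L_l(W_l) − L_l*) < 1 − 2/(κ'_l(W⁰)+1), where L_l(W_l) = (1/2)·Tr(W_lᵀ H_l W_l) and L_l* = 0. -/

import Mathlib

open Matrix

open Classical in
/-- The unique positive semidefinite square root of a positive semidefinite matrix
(junk value `0` if `A` is not positive semidefinite). -/
noncomputable def matSqrt {m : ℕ} (A : Matrix (Fin m) (Fin m) ℝ) : Matrix (Fin m) (Fin m) ℝ :=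
  if h : A.PosSemidef then
    h.1.eigenvectorUnitary.1 * diagonal ((↑) ∘ (√·) ∘ h.1.eigenvalues) *
      (star h.1.eigenvectorUnitary : Matrix (Fin m) (Fin m) ℝ)
  else 0

/-- The GradWhitening operator `A ↦ (A Aᵀ)^{-1/2} A`. -/
noncomputable def whiten {m n : ℕ} (A : Matrix (Fin m) (Fin n) ℝ) : Matrix (Fin m) (Fin n) ℝ :=
  (matSqrt (A * Aᵀ))⁻¹ * A

/-- The Schatten 1-norm (sum of singular values): `‖A‖₁ = Tr((A Aᵀ)^{1/2})`. -/
noncomputable def schattenOne {m n : ℕ} (A : Matrix (Fin m) (Fin n) ℝ) : ℝ :=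
  (matSqrt (A * Aᵀ)).trace

/-- The quadratic loss `L(W) = (1/2) * Tr(Wᵀ H W)`. -/
noncomputable def loss {m n : ℕ} (H : Matrix (Fin m) (Fin m) ℝ)
    (W : Matrix (Fin m) (Fin n) ℝ) : ℝ :=
  (1 / 2) * (Wᵀ * H * W).trace

/-!
With `A = H W` and `U = whiten A` one has `U Uᵀ = 1` and `U Aᵀ = (A Aᵀ)^{1/2}`, so the loss along
the whitened direction is an exact quadratic in the step size:
`L(W - η U) = L(W) - η ‖A‖₁ + η² Tr(H) / 2`.
Since `2 / (κ' + 1) = c := 2 λ_m / (λ_1 + λ_m)`, the whitened step on a block beats Adam's rate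
exactly when `Tr(H) η² - 2 ‖A‖₁ η + c Tr(Wᵀ H W) < 0`, i.e. when `η` lies strictly between the two
roots of this quadratic. The overlap condition says that these open intervals have a common point,
and they have a positive one because every upper root is positive.
-/

theorem Finset.exists_pos_forall_mem_Ioo_of_sup'_lt_inf' {ι : Type*} {s : Finset ι}
    (hs : s.Nonempty) {f g : ι → ℝ} (hg : ∀ i ∈ s, 0 < g i) (h : s.sup' hs f < s.inf' hs g) :
    ∃ η, 0 < η ∧ ∀ i ∈ s, f i < η ∧ η < g i := by
  have hg_inf : 0 < s.inf' hs g := (Finset.lt_inf'_iff hs).mpr hg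
  refine ⟨(max (s.sup' hs f) 0 + s.inf' hs g) / 2, by positivity, fun i hi => ⟨?_, ?_⟩⟩
  · have := Finset.le_sup' f hi
    have := le_max_left (s.sup' hs f) 0
    linarith [max_lt h hg_inf]
  · linarith [Finset.inf'_le g hi, max_lt h hg_inf]

theorem quadratic_neg_of_mem_Ioo_roots {a b k x : ℝ} (ha : 0 < a)
    (hlo : (b - √(b ^ 2 - a * k)) / a < x) (hhi : x < (b + √(b ^ 2 - a * k)) / a) :
    a * x ^ 2 - 2 * b * x + k < 0 := by
  rw [div_lt_iff₀ ha] at hlo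
  rw [lt_div_iff₀ ha] at hhi
  have hdist : |x * a - b| < √(b ^ 2 - a * k) := abs_sub_lt_iff.mpr ⟨by linarith, by linarith⟩
  have hsq := (Real.lt_sqrt (abs_nonneg _)).mp hdist
  rw [sq_abs] at hsq
  nlinarith

namespace Matrix

variable {m n : Type*} [Fintype m] [Fintype n]

theorem posDef_mul_transpose_self_of_rank_eq [DecidableEq m] (A : Matrix m n ℝ)
    (hA : A.rank = Fintype.card m) : (A * Aᵀ).PosDef := by
  have hsurj : Function.Surjective (A * Aᵀ).mulVec := by
    have : LinearMap.range (A * Aᵀ).mulVecLin = ⊤ := Submodule.eq_top_of_finrank_eq <| by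
      rw [← rank, rank_self_mul_transpose, hA, Module.finrank_fintype_fun_eq_card]
    exact LinearMap.range_eq_top.mp this
  have hpsd : (A * Aᵀ).PosSemidef := by
    simpa using posSemidef_self_mul_conjTranspose A
  exact hpsd.posDef_iff_isUnit.mpr (mulVec_surjective_iff_isUnit.mp hsurj)

theorem trace_transpose_mul_mul_pos {H : Matrix m m ℝ} (hH : H.PosDef) {W : Matrix m n ℝ}
    (hW : W ≠ 0) : 0 < (Wᵀ * H * W).trace := by
  classical
  obtain ⟨x, hx⟩ : ∃ x, W *ᵥ x ≠ 0 := by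
    by_contra! h
    exact hW (ext_of_mulVec_single fun j => by rw [h, zero_mulVec])
  have hpos : 0 < star x ⬝ᵥ (Wᵀ * H * W) *ᵥ x := by
    simpa only [star_mulVec, dotProduct_mulVec, vecMul_vecMul, conjTranspose_eq_transpose_of_trivial]
      using hH.dotProduct_mulVec_pos hx
  have hpsd : (Wᵀ * H * W).PosSemidef := by
    simpa using hH.posSemidef.conjTranspose_mul_mul_same W
  refine hpsd.trace_nonneg.lt_of_ne' fun h0 => ?_
  simp [hpsd.trace_eq_zero_iff.mp h0] at hpos

end Matrix

section MatSqrt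

variable {m : ℕ} {A : Matrix (Fin m) (Fin m) ℝ}

theorem Matrix.PosSemidef.posSemidef_matSqrt (hA : A.PosSemidef) : (matSqrt A).PosSemidef := by
  rw [matSqrt, dif_pos hA]
  simpa [star_eq_conjTranspose] using (PosSemidef.diagonal fun i => Real.sqrt_nonneg _ :
    (diagonal ((↑) ∘ (√·) ∘ hA.1.eigenvalues) : Matrix (Fin m) (Fin m) ℝ).PosSemidef)
    |>.mul_mul_conjTranspose_same hA.1.eigenvectorUnitary.1

theorem Matrix.PosSemidef.matSqrt_mul_self (hA : A.PosSemidef) : matSqrt A * matSqrt A = A := by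
  have hsq : (diagonal ((↑) ∘ (√·) ∘ hA.1.eigenvalues) : Matrix (Fin m) (Fin m) ℝ) *
      diagonal ((↑) ∘ (√·) ∘ hA.1.eigenvalues) = diagonal (RCLike.ofReal ∘ hA.1.eigenvalues) := by
    rw [diagonal_mul_diagonal]
    congr 1
    funext i
    simp [Real.mul_self_sqrt (hA.eigenvalues_nonneg i)]
  conv_rhs => rw [hA.1.spectral_theorem, Unitary.conjStarAlgAut_apply, ← hsq]
  rw [matSqrt, dif_pos hA]
  simp only [Matrix.mul_assoc]
  rw [← Matrix.mul_assoc _ _ (diagonal _ * _), Unitary.coe_star_mul_self, Matrix.one_mul]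

theorem Matrix.PosSemidef.transpose_matSqrt (hA : A.PosSemidef) : (matSqrt A)ᵀ = matSqrt A := by
  simpa using hA.posSemidef_matSqrt.isHermitian.eq

theorem Matrix.PosDef.isUnit_det_matSqrt (hA : A.PosDef) : IsUnit (matSqrt A).det := by
  have hdet : 0 < (matSqrt A).det * (matSqrt A).det := by
    rw [← det_mul, hA.posSemidef.matSqrt_mul_self]
    exact hA.det_pos
  exact isUnit_iff_ne_zero.mpr fun h => by simp [h] at hdet

end MatSqrt

theorem schattenOne_nonneg {m n : ℕ} (A : Matrix (Fin m) (Fin n) ℝ) : 0 ≤ schattenOne A :=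
  (by simpa using posSemidef_self_mul_conjTranspose A : (A * Aᵀ).PosSemidef)
    |>.posSemidef_matSqrt.trace_nonneg

theorem pos_of_sq_schattenOne_sub_pos {m n : ℕ} {H : Matrix (Fin m) (Fin m) ℝ}
    {W : Matrix (Fin m) (Fin n) ℝ} {c : ℝ}
    (h : 0 < schattenOne (H * W) ^ 2 - H.trace * (Wᵀ * H * W).trace * c) : 0 < m := by
  rcases Nat.eq_zero_or_pos m with rfl | hm
  · simp [schattenOne, Matrix.trace] at h
  · exact hm

section Whiten

variable {m n : ℕ} {A : Matrix (Fin m) (Fin n) ℝ}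

theorem whiten_mul_transpose (hA : (A * Aᵀ).PosDef) : whiten A * Aᵀ = matSqrt (A * Aᵀ) := by
  calc whiten A * Aᵀ = (matSqrt (A * Aᵀ))⁻¹ * (matSqrt (A * Aᵀ) * matSqrt (A * Aᵀ)) := by
        rw [hA.posSemidef.matSqrt_mul_self, whiten, Matrix.mul_assoc]
    _ = matSqrt (A * Aᵀ) := nonsing_inv_mul_cancel_left _ _ hA.isUnit_det_matSqrt

theorem whiten_mul_transpose_whiten (hA : (A * Aᵀ).PosDef) : whiten A * (whiten A)ᵀ = 1 := by
  conv_lhs => rw [whiten, transpose_mul, transpose_nonsing_inv,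
    hA.posSemidef.transpose_matSqrt, ← Matrix.mul_assoc, ← whiten, whiten_mul_transpose hA]
  exact mul_nonsing_inv _ hA.isUnit_det_matSqrt

end Whiten

section Loss

variable {m n : ℕ} {H : Matrix (Fin m) (Fin m) ℝ}

theorem loss_sub_smul (hH : Hᵀ = H) (W U : Matrix (Fin m) (Fin n) ℝ) (η : ℝ) :
    loss H (W - η • U) =
      loss H W - η * (U * (H * W)ᵀ).trace + η ^ 2 / 2 * (H * (U * Uᵀ)).trace := by
  have hWHU : (Wᵀ * H * U).trace = (U * (H * W)ᵀ).trace := by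
    rw [trace_mul_comm, transpose_mul, hH]
  have hUHW : (Uᵀ * H * W).trace = (U * (H * W)ᵀ).trace := by
    rw [← trace_transpose, transpose_mul, transpose_mul, transpose_transpose, hH,
      ← Matrix.mul_assoc, hWHU]
  have hquad : (Uᵀ * H * U).trace = (H * (U * Uᵀ)).trace := by
    rw [trace_mul_comm, ← Matrix.mul_assoc, trace_mul_comm]
  simp only [loss, transpose_sub, transpose_smul, Matrix.sub_mul, Matrix.mul_sub, Matrix.smul_mul,
    Matrix.mul_smul, trace_sub, trace_smul, smul_eq_mul, hUHW, hWHU, hquad]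
  ring

theorem loss_sub_smul_whiten (hH : Hᵀ = H) {W : Matrix (Fin m) (Fin n) ℝ}
    (hW : (H * W * (H * W)ᵀ).PosDef) (η : ℝ) :
    loss H (W - η • whiten (H * W)) =
      loss H W - η * schattenOne (H * W) + η ^ 2 / 2 * H.trace := by
  rw [loss_sub_smul hH, whiten_mul_transpose hW, whiten_mul_transpose_whiten hW, Matrix.mul_one,
    schattenOne]

end Loss

theorem loss_sub_smul_whiten_div_lt {m n : ℕ} [NeZero m] {H : Matrix (Fin m) (Fin m) ℝ}
    (hH : H.PosDef) {W : Matrix (Fin m) (Fin n) ℝ} (hr : (H * W).rank = m) {c η : ℝ}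
    (hη : H.trace * η ^ 2 - 2 * schattenOne (H * W) * η + (Wᵀ * H * W).trace * c < 0) :
    loss H (W - η • whiten (H * W)) / loss H W < 1 - c := by
  have hW : W ≠ 0 := by
    rintro rfl
    simp only [Matrix.mul_zero, rank_zero] at hr
    exact NeZero.ne m hr.symm
  have hloss : 0 < loss H W := by
    have := trace_transpose_mul_mul_pos hH hW
    unfold loss; positivity
  have hA : (H * W * (H * W)ᵀ).PosDef :=
    posDef_mul_transpose_self_of_rank_eq _ (by rw [hr, Fintype.card_fin])
  rw [loss_sub_smul_whiten (by simpa using hH.isHermitian.eq) hA, div_lt_iff₀ hloss]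
  unfold loss
  linarith

theorem whitened_single_lr_beats_adam_group_lr_general {ι : Type*} [Fintype ι] [Nonempty ι]
    (md nd : ι → ℕ)
    (H : ∀ l, Matrix (Fin (md l)) (Fin (md l)) ℝ) (hH : ∀ l, (H l).PosDef)
    (W : ∀ l, Matrix (Fin (md l)) (Fin (nd l)) ℝ)
    (hrank : ∀ l, (H l * W l).rank = md l)
    (lam1 lamm : ι → ℝ)
    (hpos : ∀ l, 0 < lamm l)
    (hroots : ∀ l, 0 < schattenOne (H l * W l) ^ 2 -
        (H l).trace * ((W l)ᵀ * H l * W l).trace * (2 * lamm l / (lam1 l + lamm l)))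
    (hoverlap :
      (Finset.univ.sup' Finset.univ_nonempty fun l =>
        (schattenOne (H l * W l) -
          Real.sqrt (schattenOne (H l * W l) ^ 2 -
            (H l).trace * ((W l)ᵀ * H l * W l).trace *
              (2 * lamm l / (lam1 l + lamm l)))) / (H l).trace) <
      (Finset.univ.inf' Finset.univ_nonempty fun l =>
        (schattenOne (H l * W l) +
          Real.sqrt (schattenOne (H l * W l) ^ 2 -
            (H l).trace * ((W l)ᵀ * H l * W l).trace *
              (2 * lamm l / (lam1 l + lamm l)))) / (H l).trace)) :
    ∃ η : ℝ, 0 < η ∧ ∀ l,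
      (loss (H l) (W l - η • whiten (H l * W l)) - 0) / (loss (H l) (W l) - 0) <
        1 - 2 / (lam1 l / lamm l + 1) := by
  have hm : ∀ l, NeZero (md l) := fun l => ⟨(pos_of_sq_schattenOne_sub_pos (hroots l)).ne'⟩
  have hroot_pos : ∀ l ∈ Finset.univ, 0 < (schattenOne (H l * W l) + Real.sqrt
      (schattenOne (H l * W l) ^ 2 - (H l).trace * ((W l)ᵀ * H l * W l).trace *
        (2 * lamm l / (lam1 l + lamm l)))) / (H l).trace := fun l _ =>
    div_pos (add_pos_of_nonneg_of_pos (schattenOne_nonneg _) (Real.sqrt_pos.mpr (hroots l)))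
      (hH l).trace_pos
  obtain ⟨η, hη, hη_mem⟩ :=
    Finset.exists_pos_forall_mem_Ioo_of_sup'_lt_inf' _ hroot_pos hoverlap
  refine ⟨η, hη, fun l => ?_⟩
  obtain ⟨hlo, hhi⟩ := hη_mem l (Finset.mem_univ l)
  simp only [mul_assoc] at hlo hhi
  rw [sub_zero, sub_zero, div_add_one (hpos l).ne', div_div_eq_mul_div]
  exact loss_sub_smul_whiten_div_lt (hH l) (hrank l)
    (by simpa only [mul_assoc] using quadratic_neg_of_mem_Ioo_roots (hH l).trace_pos hlo hhi)

/-- Block-diagonal case, comparison with Adam's groupwise-preconditioned rates: under the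
per-block existence-of-roots condition and the overlap condition, a single global step size
`η` makes the whitened update on every block `l` contract strictly faster than
`1 − 2/(κ'_l(W⁰)+1)`, where `κ'_l(W⁰)` is the condition number of the preconditioned block
`diag(|H_l W_l⁰|)⁻¹ H_l`. -/
theorem whitened_single_lr_beats_adam_group_lr {ι : Type*} [Fintype ι] [Nonempty ι]
    (md nd : ι → ℕ)
    (H : ∀ l, Matrix (Fin (md l)) (Fin (md l)) ℝ) (hH : ∀ l, (H l).PosDef)
    (W : ∀ l, Matrix (Fin (md l)) (Fin (nd l)) ℝ)
    (hrank : ∀ l, (H l * W l).rank = md l)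
    (W0 : ∀ l, Fin (md l) → ℝ)
    (hnz : ∀ l i, (H l).mulVec (W0 l) i ≠ 0)
    (lam1 lamm : ι → ℝ)
    (hpos : ∀ l, 0 < lamm l) (hle : ∀ l, lamm l ≤ lam1 l)
    (hlam1_eig : ∀ l, Module.End.HasEigenvalue
      (Matrix.mulVecLin ((Matrix.diagonal fun i => |(H l).mulVec (W0 l) i|)⁻¹ * H l)) (lam1 l))
    (hlamm_eig : ∀ l, Module.End.HasEigenvalue
      (Matrix.mulVecLin ((Matrix.diagonal fun i => |(H l).mulVec (W0 l) i|)⁻¹ * H l)) (lamm l))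
    (heig_bounds : ∀ l (μ : ℝ), Module.End.HasEigenvalue
      (Matrix.mulVecLin ((Matrix.diagonal fun i => |(H l).mulVec (W0 l) i|)⁻¹ * H l)) μ →
        lamm l ≤ μ ∧ μ ≤ lam1 l)
    (hroots : ∀ l, 0 < schattenOne (H l * W l) ^ 2 -
        (H l).trace * ((W l)ᵀ * H l * W l).trace * (2 * lamm l / (lam1 l + lamm l)))
    (hoverlap :
      (Finset.univ.sup' Finset.univ_nonempty fun l =>
        (schattenOne (H l * W l) -
          Real.sqrt (schattenOne (H l * W l) ^ 2 -
            (H l).trace * ((W l)ᵀ * H l * W l).trace *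
              (2 * lamm l / (lam1 l + lamm l)))) / (H l).trace) <
      (Finset.univ.inf' Finset.univ_nonempty fun l =>
        (schattenOne (H l * W l) +
          Real.sqrt (schattenOne (H l * W l) ^ 2 -
            (H l).trace * ((W l)ᵀ * H l * W l).trace *
              (2 * lamm l / (lam1 l + lamm l)))) / (H l).trace)) :
    ∃ η : ℝ, 0 < η ∧ ∀ l,
      (loss (H l) (W l - η • whiten (H l * W l)) - 0) / (loss (H l) (W l) - 0) <
        1 - 2 / (lam1 l / lamm l + 1) :=
  whitened_single_lr_beats_adam_group_lr_general md nd H hH W hrank lam1 lamm hpos hroots hoverlap
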